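/- Let u ∈ ℂ^n, s > 0, and X ∈ ℂ^n be such that the block matrix [[Toep(u), X],[Xᴴ, s]] is positive semidefinite. Suppose Toep(u) = V D Vᴴ, where V = [a(t_1,0), ..., a(t_r,0)] for distinct t_1,...,t_r ∈ [0,1) with r ≤ n, and D is a diagonal matrix with nonnegative diagonal entries. Then (1/n)·s·Tr(Toep(u)) ≥ ‖X‖_A². -/

import Mathlib

/-!
The Schur complement of the positive semidefinite block matrix gives
`|Xᴴ y|² ≤ s · yᴴ Toep(u) y = s · Σⱼ dⱼ |(Vᴴ y)ⱼ|²` for every `y`. Distinct nodes and `r ≤ n`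
make `V` a matrix with a nonsingular Vandermonde block, so `Vᴴ` is onto. The inequality shows that
`X` annihilates `ker Vᴴ`, hence `X = V w`; choosing `y` with `Vᴴ y` equal to the phases of `w`
turns it into `(Σⱼ |wⱼ|)² ≤ s · Σⱼ dⱼ`. Finally `X = Σⱼ wⱼ a(tⱼ,0)` gives `‖X‖_A ≤ Σⱼ |wⱼ|`, and
`Tr Toep(u) = n · Σⱼ dⱼ` because the atoms have unimodular entries.
-/

open Matrix Complex ComplexConjugate BigOperators
open scoped ComplexOrder

/-- The atom `a(t,φ) ∈ ℂ^n` with `f`-th entry `e^{−i(2πft−φ)}`. -/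
noncomputable def atom (n : ℕ) (t φ : ℝ) : Fin n → ℂ :=
  fun f => Complex.exp (-Complex.I * ((2 * Real.pi * (f : ℕ) * t : ℝ) - (φ : ℝ)))

/-- The atomic norm of `X ∈ ℂ^n`. -/
noncomputable def atomicNorm {n : ℕ} (X : Fin n → ℂ) : ℝ :=
  sInf { v : ℝ | ∃ (k : ℕ) (c : Fin k → ℂ) (t φ : Fin k → ℝ),
    (∀ j, t j ∈ Set.Ico (0 : ℝ) 1) ∧ (∀ j, φ j ∈ Set.Ico (0 : ℝ) (2 * Real.pi)) ∧
    X = ∑ j, ((‖c j‖ : ℝ) : ℂ) • atom n (t j) (φ j) ∧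
    v = ∑ j, ‖c j‖ }

/-- The Hermitian Toeplitz matrix whose first column is `u`. -/
def toep (n : ℕ) (u : Fin n → ℂ) : Matrix (Fin n) (Fin n) ℂ :=
  Matrix.of fun j k =>
    if (k : ℕ) ≤ (j : ℕ) then
      u ⟨(j : ℕ) - (k : ℕ), lt_of_le_of_lt (Nat.sub_le _ _) j.isLt⟩
    else
      star (u ⟨(k : ℕ) - (j : ℕ), lt_of_le_of_lt (Nat.sub_le _ _) k.isLt⟩)

/-- The `(n+1)×(n+1)` block matrix `[[T, X],[Xᴴ, s]]`. -/
noncomputable def blockMat {n : ℕ} (T : Matrix (Fin n) (Fin n) ℂ) (X : Fin n → ℂ) (s : ℝ) :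
    Matrix (Fin n ⊕ Unit) (Fin n ⊕ Unit) ℂ :=
  Matrix.fromBlocks T (Matrix.replicateCol Unit X) (Matrix.replicateRow Unit (star X))
    (Matrix.of fun _ _ => (s : ℂ))

namespace Matrix

variable {m ι R : Type*} [Fintype m] [Fintype ι]

theorem exists_conjTranspose_mul_eq_one [DecidableEq ι] [Field R] [PartialOrder R] [StarRing R]
    [StarOrderedRing R] {A : Matrix m ι R} (hA : Function.Injective A.mulVec) :
    ∃ G : Matrix m ι R, Aᴴ * G = 1 := by
  have hgram : IsUnit (Aᴴ * A) := by
    refine mulVec_injective_iff_isUnit.mp <| (injective_iff_map_eq_zero (Aᴴ * A).mulVecLin).mpr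
      fun v hv => ?_
    exact (injective_iff_map_eq_zero A.mulVecLin).mp hA v
      ((conjTranspose_mul_self_mulVec_eq_zero A v).mp hv)
  refine ⟨A * (Aᴴ * A)⁻¹, ?_⟩
  rw [← Matrix.mul_assoc, mul_nonsing_inv _ ((isUnit_iff_isUnit_det _).mp hgram)]

theorem eq_mulVec_of_conjTranspose_mul_eq_one [DecidableEq ι] [CommRing R] [StarRing R]
    {V G : Matrix m ι R} (hG : Vᴴ * G = 1) {X : m → R}
    (hX : ∀ y, Vᴴ *ᵥ y = 0 → star X ⬝ᵥ y = 0) : X = V *ᵥ (Gᴴ *ᵥ X) := by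
  refine star_injective <| dotProduct_eq _ _ fun y => ?_
  have hker : Vᴴ *ᵥ (y - G *ᵥ (Vᴴ *ᵥ y)) = 0 := by
    rw [mulVec_sub, mulVec_mulVec, hG, one_mulVec, sub_self]
  rw [mulVec_mulVec, star_mulVec, conjTranspose_mul, conjTranspose_conjTranspose,
    ← dotProduct_mulVec, ← sub_eq_zero, ← dotProduct_sub, ← mulVec_mulVec]
  exact hX _ hker

theorem dotProduct_mul_mul_conjTranspose_mulVec [CommRing R] [StarRing R] (V : Matrix m ι R)
    (D : Matrix ι ι R) (y : m → R) :
    star y ⬝ᵥ (V * D * Vᴴ) *ᵥ y = star (Vᴴ *ᵥ y) ⬝ᵥ D *ᵥ (Vᴴ *ᵥ y) := by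
  rw [← mulVec_mulVec, ← mulVec_mulVec, dotProduct_mulVec, star_mulVec,
    conjTranspose_conjTranspose]

theorem trace_mul_diagonal_mul_conjTranspose_of_norm_eq_one [DecidableEq ι] {V : Matrix m ι ℂ}
    (hV : ∀ f j, ‖V f j‖ = 1) (d : ι → ℂ) :
    (V * diagonal d * Vᴴ).trace = Fintype.card m * ∑ j, d j := by
  have hdiag : ∀ f, (V * diagonal d * Vᴴ) f f = ∑ j, d j := fun f => by
    refine (mul_apply ..).trans <| Finset.sum_congr rfl fun j _ => ?_
    rw [mul_diagonal, conjTranspose_apply, mul_right_comm, Complex.star_def, Complex.mul_conj',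
      hV, Complex.ofReal_one, one_pow, one_mul]
  simp [trace, hdiag]

theorem mulVec_injective_of_eq_pow [CommRing R] [IsDomain R] {n r : ℕ} (hr : r ≤ n)
    {z : Fin r → R} (hz : Function.Injective z) {V : Matrix (Fin n) (Fin r) R}
    (hV : ∀ f l, V f l = z l ^ (f : ℕ)) : Function.Injective V.mulVec := by
  refine (injective_iff_map_eq_zero V.mulVecLin).mpr fun c hc => ?_
  refine eq_zero_of_forall_pow_sum_mul_pow_eq_zero hz fun i => ?_
  simpa [mulVec, dotProduct, hV, mul_comm] using congrFun hc (Fin.castLE hr i)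

end Matrix

theorem sq_sum_norm_le_of_forall_norm_dotProduct_sq_le {ι : Type*} [Fintype ι] [DecidableEq ι]
    {w : ι → ℂ} {d : ι → ℝ} {s : ℝ}
    (h : ∀ m, ‖star w ⬝ᵥ m‖ ^ 2 ≤ s * (star m ⬝ᵥ diagonal (fun j => (d j : ℂ)) *ᵥ m).re) :
    (∑ j, ‖w j‖) ^ 2 ≤ s * ∑ j, d j := by
  set phase : ι → ℂ := fun j => Complex.exp ((w j).arg * Complex.I)
  have hphase : ∀ j, (starRingEnd ℂ) (phase j) * phase j = 1 := fun j => by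
    rw [Complex.conj_mul', Complex.norm_exp_ofReal_mul_I]
    simp
  have hw : star w ⬝ᵥ phase = ((∑ j, ‖w j‖ : ℝ) : ℂ) := by
    push_cast
    refine Finset.sum_congr rfl fun j _ => ?_
    rw [Pi.star_apply]
    conv_lhs => rw [← Complex.norm_mul_exp_arg_mul_I (w j)]
    rw [star_mul', Complex.star_def, Complex.conj_ofReal, mul_assoc, hphase, mul_one]
  have hd : star phase ⬝ᵥ diagonal (fun j => (d j : ℂ)) *ᵥ phase = ((∑ j, d j : ℝ) : ℂ) := by
    push_cast
    refine Finset.sum_congr rfl fun j _ => ?_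
    rw [mulVec_diagonal, Pi.star_apply, Complex.star_def, mul_left_comm, hphase, mul_one]
  have := h phase
  rwa [hw, hd, Complex.ofReal_re, Complex.norm_real,
    Real.norm_of_nonneg (Finset.sum_nonneg fun j _ => norm_nonneg _)] at this

theorem blockMat_quadratic_form {n : ℕ} (T : Matrix (Fin n) (Fin n) ℂ) (X y : Fin n → ℂ) (s : ℝ)
    (z : ℂ) :
    star (Sum.elim y fun _ : Unit => z) ⬝ᵥ (blockMat T X s *ᵥ Sum.elim y fun _ => z) =
      star y ⬝ᵥ T *ᵥ y + (star (star X ⬝ᵥ y) * z + star z * (star X ⬝ᵥ y) + s * (star z * z)) := by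
  simp only [dotProduct, Pi.star_apply, RCLike.star_def, mulVec, blockMat, Fintype.sum_sum_type,
    Sum.elim_inl, Finset.univ_unique, PUnit.default_eq_unit, Sum.elim_inr, Finset.sum_singleton,
    fromBlocks_apply₁₁, fromBlocks_apply₁₂, replicateCol_apply, fromBlocks_apply₂₁,
    replicateRow_apply, fromBlocks_apply₂₂, of_apply, star_sum, star_mul',
    RingHomCompTriple.comp_apply, RingHom.id_apply, mul_add, Finset.sum_add_distrib,
    Finset.mul_sum, Finset.sum_mul]
  ring_nf
  ac_rfl

theorem norm_dotProduct_sq_le_of_posSemidef_blockMat {n : ℕ} {T : Matrix (Fin n) (Fin n) ℂ}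
    {X : Fin n → ℂ} {s : ℝ} (hs : 0 < s) (h : (blockMat T X s).PosSemidef) (y : Fin n → ℂ) :
    ‖star X ⬝ᵥ y‖ ^ 2 ≤ s * (star y ⬝ᵥ T *ᵥ y).re := by
  have hq := h.dotProduct_mulVec_nonneg (Sum.elim y fun _ => -(star X ⬝ᵥ y / s))
  rw [blockMat_quadratic_form] at hq
  set c := star X ⬝ᵥ y
  have hs' : (s : ℂ) ≠ 0 := by exact_mod_cast hs.ne'
  have hcross : star c * -(c / s) + star (-(c / s)) * c + s * (star (-(c / s)) * -(c / s)) =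
      -((‖c‖ ^ 2 / s : ℝ) : ℂ) := by
    rw [star_neg, star_div₀, Complex.star_def, Complex.conj_ofReal]
    push_cast
    rw [← Complex.conj_mul']
    field_simp
    ring
  have hre := (Complex.le_def.mp hq).1
  rw [hcross, Complex.zero_re, ← sub_eq_add_neg, Complex.sub_re, Complex.ofReal_re,
    sub_nonneg, div_le_iff₀ hs] at hre
  linarith

theorem atom_zero_apply (n : ℕ) (t : ℝ) (f : Fin n) :
    atom n t 0 f = (Circle.exp (-(2 * Real.pi * t)) : ℂ) ^ (f : ℕ) := by
  rw [atom, Circle.coe_exp, ← Complex.exp_nat_mul]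
  push_cast
  ring_nf

theorem atom_eq_exp_smul (n : ℕ) (t φ : ℝ) :
    atom n t φ = Complex.exp (φ * Complex.I) • atom n t 0 := by
  funext f
  simp only [atom, Pi.smul_apply, smul_eq_mul, ← Complex.exp_add]
  push_cast
  ring_nf

theorem injOn_circleExp_neg_two_pi_mul :
    Set.InjOn (fun t : ℝ => Circle.exp (-(2 * Real.pi * t))) (Set.Ico 0 1) := by
  have h := Circle.exp_injOn_Ioc (a := -(2 * Real.pi)) (b := 0) (by linarith [Real.pi_pos])
  intro x hx y hy hxy
  have := h ⟨by nlinarith [hx.2, Real.pi_pos], by nlinarith [hx.1, Real.pi_pos]⟩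
    ⟨by nlinarith [hy.2, Real.pi_pos], by nlinarith [hy.1, Real.pi_pos]⟩ hxy
  nlinarith [Real.pi_pos]

theorem atomicNorm_nonneg {n : ℕ} (X : Fin n → ℂ) : 0 ≤ atomicNorm X :=
  Real.sInf_nonneg fun _ ⟨_, c, _, _, _, _, _, hv⟩ =>
    hv ▸ Finset.sum_nonneg fun j _ => norm_nonneg (c j)

theorem atomicNorm_sum_smul_atom_le {n k : ℕ} (w : Fin k → ℂ) (t : Fin k → ℝ)
    (ht : ∀ j, t j ∈ Set.Ico 0 1) : atomicNorm (∑ j, w j • atom n (t j) 0) ≤ ∑ j, ‖w j‖ := by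
  set φ : Fin k → ℝ := fun j => toIcoMod Real.two_pi_pos 0 (w j).arg
  have hφ : ∀ j, ((‖w j‖ : ℝ) : ℂ) • atom n (t j) (φ j) = w j • atom n (t j) 0 := fun j => by
    have hexp : Complex.exp (φ j * Complex.I) = Complex.exp ((w j).arg * Complex.I) := by
      simp only [φ, ← Circle.coe_exp, ← self_sub_toIcoDiv_zsmul, Circle.periodic_exp.sub_zsmul_eq]
    rw [atom_eq_exp_smul, smul_smul, hexp, Complex.norm_mul_exp_arg_mul_I]
  refine csInf_le ⟨0, fun _ ⟨_, c, _, _, _, _, _, hv⟩ =>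
      hv ▸ Finset.sum_nonneg fun j _ => norm_nonneg (c j)⟩
    ⟨k, w, t, φ, ht, fun j => ?_, by simp only [hφ], rfl⟩
  simpa using toIcoMod_mem_Ico Real.two_pi_pos 0 (w j).arg

theorem squared_atomicNorm_le_sdp_value_general (n r : ℕ) (hr : r ≤ n) (u X : Fin n → ℂ)
    (s : ℝ) (hs : 0 < s)
    (hpsd : (blockMat (toep n u) X s).PosSemidef)
    (t : Fin r → ℝ) (ht : ∀ j, t j ∈ Set.Ico (0 : ℝ) 1) (htinj : Function.Injective t)
    (d : Fin r → ℝ)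
    (V : Matrix (Fin n) (Fin r) ℂ) (hV : ∀ f l, V f l = atom n (t l) 0 f)
    (hdecomp : toep n u = V * Matrix.diagonal (fun j => (d j : ℂ)) * Vᴴ) :
    (1 / (n : ℝ)) * s * ((toep n u).trace).re ≥ (atomicNorm X) ^ 2 := by
  set z : Fin r → ℂ := fun l => Circle.exp (-(2 * Real.pi * t l))
  have hVz : ∀ f l, V f l = z l ^ (f : ℕ) := fun f l => (hV f l).trans (atom_zero_apply ..)
  have hz : Function.Injective z := fun l l' h =>
    htinj (injOn_circleExp_neg_two_pi_mul (ht l) (ht l') (Subtype.val_injective h))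
  obtain ⟨G, hG⟩ := exists_conjTranspose_mul_eq_one (mulVec_injective_of_eq_pow hr hz hVz)
  have hkey : ∀ y, ‖star X ⬝ᵥ y‖ ^ 2 ≤
      s * (star (Vᴴ *ᵥ y) ⬝ᵥ diagonal (fun j => (d j : ℂ)) *ᵥ (Vᴴ *ᵥ y)).re := fun y => by
    simpa only [hdecomp, dotProduct_mul_mul_conjTranspose_mulVec] using
      norm_dotProduct_sq_le_of_posSemidef_blockMat hs hpsd y
  set w := Gᴴ *ᵥ X
  have hXw : X = V *ᵥ w := eq_mulVec_of_conjTranspose_mul_eq_one hG fun y hy => by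
    simpa [hy] using hkey y
  have hw : (∑ j, ‖w j‖) ^ 2 ≤ s * ∑ j, d j :=
    sq_sum_norm_le_of_forall_norm_dotProduct_sq_le fun m => by
      simpa only [mulVec_mulVec, hG, one_mulVec, hXw, star_mulVec, ← dotProduct_mulVec]
        using hkey (G *ᵥ m)
  have hnorm : atomicNorm X ≤ ∑ j, ‖w j‖ := by
    have hsum : X = ∑ j, w j • atom n (t j) 0 := by
      rw [hXw]
      ext f
      simp [mulVec, dotProduct, hV, mul_comm]
    exact hsum ▸ atomicNorm_sum_smul_atom_le w t ht
  have htr : (toep n u).trace.re = n * ∑ j, d j := by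
    rw [hdecomp, trace_mul_diagonal_mul_conjTranspose_of_norm_eq_one
      (fun f l => by rw [hVz, norm_pow, Circle.norm_coe, one_pow])]
    simp
  calc atomicNorm X ^ 2 ≤ (∑ j, ‖w j‖) ^ 2 := pow_le_pow_left₀ (atomicNorm_nonneg X) hnorm 2
    _ ≤ s * ∑ j, d j := hw
    _ = 1 / n * s * (toep n u).trace.re := by
      rcases n.eq_zero_or_pos with rfl | hn
      · obtain rfl := Nat.le_zero.mp hr
        simp
      · rw [htr]
        field_simp

/-- The other direction of Proposition 1: any feasible point of the SDP whose Toeplitz block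
admits a Vandermonde decomposition has value at least `‖X‖_A²`. -/
theorem squared_atomicNorm_le_sdp_value (n r : ℕ) (hr : r ≤ n) (u X : Fin n → ℂ)
    (s : ℝ) (hs : 0 < s)
    (hpsd : (blockMat (toep n u) X s).PosSemidef)
    (t : Fin r → ℝ) (ht : ∀ j, t j ∈ Set.Ico (0 : ℝ) 1) (htinj : Function.Injective t)
    (d : Fin r → ℝ) (hd : ∀ j, 0 ≤ d j)
    (V : Matrix (Fin n) (Fin r) ℂ) (hV : ∀ f l, V f l = atom n (t l) 0 f)
    (hdecomp : toep n u = V * Matrix.diagonal (fun j => (d j : ℂ)) * Vᴴ) :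
    (1 / (n : ℝ)) * s * ((toep n u).trace).re ≥ (atomicNorm X) ^ 2 :=
  squared_atomicNorm_le_sdp_value_general n r hr u X s hs hpsd t ht htinj d V hV hdecomp
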